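/- Let ψ, θ_1,…,θ_M and D_1,…,D_M be random variables on a common probability space taking values in finite sets. Assume (a) θ_1,…,θ_M are mutually conditionally independent given ψ, and (b) for each m, D_m is conditionally independent of ((θ_j, D_j) : j ≠ m) given (ψ, θ_m). Then I( (D_1,…,D_M) ; (ψ, θ_1,…,θ_M) ) = I( (D_1,…,D_M) ; ψ ) + ∑_{m=1}^{M} I( D_m ; θ_m | ψ ). (Dividing by MT, the optimal meta-learning estimation error decomposes exactly into a meta-estimation error I(H_{M,T};ψ)/(MT) plus intra-task estimation errors ∑_m I(X^{(m)}_{0:T};θ_m|ψ)/(MT).) -/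

import Mathlib

/-!
Statement 5 (meta-learning estimation error decomposition): if the task parameters
`θ_1,…,θ_M` are mutually conditionally independent given the meta-parameters `ψ` (expressed
via the equivalent entropy identity `H(θ_{1:M}|ψ) = ∑_m H(θ_m|ψ)`), and each task's data
`D_m` is conditionally independent of all other tasks' parameters and data given `(ψ, θ_m)`
(expressed via vanishing conditional mutual information), then
`I(D_{1:M}; (ψ, θ_{1:M})) = I(D_{1:M}; ψ) + ∑_m I(D_m; θ_m | ψ)`.
-/

open scoped Classical

noncomputable section

/-- Probability of the event `X = a` under the pmf `p` on a finite sample space. -/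
def pr {Ω : Type*} [Fintype Ω] (p : Ω → ℝ) {A : Type*} (X : Ω → A) (a : A) : ℝ :=
  ∑ ω, if X ω = a then p ω else 0

/-- Shannon entropy of a random variable (in nats). -/
def entropy {Ω : Type*} [Fintype Ω] (p : Ω → ℝ) {A : Type*} [Fintype A] (X : Ω → A) : ℝ :=
  ∑ a, Real.negMulLog (pr p X a)

/-- Conditional entropy `H(X|Y) = H(X,Y) - H(Y)` (in nats). -/
def condEntropy {Ω : Type*} [Fintype Ω] (p : Ω → ℝ) {A B : Type*} [Fintype A] [Fintype B]
    (X : Ω → A) (Y : Ω → B) : ℝ :=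
  entropy p (fun ω => (X ω, Y ω)) - entropy p Y

/-- Mutual information `I(X;Y) = H(X) + H(Y) - H(X,Y)` (in nats). -/
def mutualInfo {Ω : Type*} [Fintype Ω] (p : Ω → ℝ) {A B : Type*} [Fintype A] [Fintype B]
    (X : Ω → A) (Y : Ω → B) : ℝ :=
  entropy p X + entropy p Y - entropy p (fun ω => (X ω, Y ω))

/-- Conditional mutual information `I(X;Y|Z) = H(X,Z) + H(Y,Z) - H(X,Y,Z) - H(Z)` (in nats). -/
def condMutualInfo {Ω : Type*} [Fintype Ω] (p : Ω → ℝ) {A B C : Type*}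
    [Fintype A] [Fintype B] [Fintype C] (X : Ω → A) (Y : Ω → B) (Z : Ω → C) : ℝ :=
  entropy p (fun ω => (X ω, Z ω)) + entropy p (fun ω => (Y ω, Z ω))
    - entropy p (fun ω => ((X ω, Y ω), Z ω)) - entropy p Z

/-!
By the chain rule `I(D; ψ, θ) = I(D; ψ) + I(D; θ | ψ)`, so it suffices to show
`I(D; θ | ψ) = ∑ₘ I(Dₘ; θₘ | ψ)`. For `≤`, write `I(D; θ | ψ) = H(D | ψ) - H(D | ψ, θ)`:
subadditivity bounds `H(D | ψ)` by `∑ H(Dₘ | ψ)`, and the chain rule together with (b) bounds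
`H(D | ψ, θ)` from below by `∑ H(Dₘ | ψ, θₘ)`. For `≥`, write it as `H(θ | ψ) - H(θ | ψ, D)`:
(a) turns `H(θ | ψ)` into `∑ H(θₘ | ψ)`, and subadditivity followed by dropping conditioning
variables bounds `H(θ | ψ, D)` by `∑ H(θₘ | ψ, Dₘ)`. Both directions rest on
`I(X; Y | Z) ≥ 0`, which is `log x ≤ x - 1` applied pointwise.
-/

open Finset Real

/-- The subfamily `(X i)_{i ∈ s}`, padded with `none` so that all subfamilies share one type. -/
def tupleOn {Ω ι : Type*} [DecidableEq ι] {T : ι → Type*} (X : ∀ i, Ω → T i) (s : Finset ι)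
    (ω : Ω) : ∀ i, Option (T i) :=
  fun i => if i ∈ s then some (X i ω) else none

lemma tupleOn_eq_tupleOn_iff {Ω ι : Type*} [DecidableEq ι] {T : ι → Type*} {X : ∀ i, Ω → T i}
    {s : Finset ι} {ω ω' : Ω} :
    tupleOn X s ω = tupleOn X s ω' ↔ ∀ i ∈ s, X i ω = X i ω' := by
  simp only [tupleOn, funext_iff]
  refine forall_congr' fun i => ?_
  split_ifs <;> simp [*]

lemma sub_mul_div_le_mul_log {r a b c : ℝ} (hr : 0 ≤ r) (ha : r ≤ a) (hb : r ≤ b) (hc : r ≤ c) :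
    r - a * b / c ≤ r * (log r + log c - log a - log b) := by
  rcases hr.eq_or_lt with rfl | hr
  · simpa using div_nonneg (mul_nonneg ha hb) hc
  have ha' : 0 < a := hr.trans_le ha
  have hb' : 0 < b := hr.trans_le hb
  have hc' : 0 < c := hr.trans_le hc
  have hlog : log (a * b / (c * r)) = log a + log b - log c - log r := by
    rw [log_div (by positivity) (by positivity), log_mul ha'.ne' hb'.ne', log_mul hc'.ne' hr.ne']
    ring
  have hmul : r * (a * b / (c * r)) = a * b / c := by field_simp
  have key := mul_le_mul_of_nonneg_left
    (log_le_sub_one_of_pos (by positivity : 0 < a * b / (c * r))) hr.le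
  rw [hlog, mul_sub_one, hmul] at key
  linarith

section InformationTheory

variable {Ω : Type*} [Fintype Ω] {p : Ω → ℝ} {A B C : Type*}

lemma pr_nonneg (hp0 : ∀ ω, 0 ≤ p ω) (X : Ω → A) (a : A) : 0 ≤ pr p X a :=
  sum_nonneg fun ω _ => by split_ifs <;> simp [hp0 ω]

lemma pr_congr {X : Ω → A} {Y : Ω → B} {a : A} {b : B} (h : ∀ ω, X ω = a ↔ Y ω = b) :
    pr p X a = pr p Y b := by
  simp only [pr, h]

lemma pr_le_pr_comp (hp0 : ∀ ω, 0 ≤ p ω) (g : A → B) (X : Ω → A) (a : A) :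
    pr p X a ≤ pr p (fun ω => g (X ω)) (g a) :=
  sum_le_sum fun ω _ => by split_ifs <;> simp_all [hp0 ω]

variable [Fintype A]

lemma sum_pr_mul (X : Ω → A) (f : A → ℝ) : ∑ a, pr p X a * f a = ∑ ω, p ω * f (X ω) := by
  simp only [pr, sum_mul, ite_mul, zero_mul]
  rw [sum_comm]
  simp

lemma sum_pr (X : Ω → A) : ∑ a, pr p X a = ∑ ω, p ω := by
  simpa using sum_pr_mul (p := p) X 1

lemma sum_pr_prod_left (X : Ω → A) (Z : Ω → B) (c : B) :
    ∑ a, pr p (fun ω => (X ω, Z ω)) (a, c) = pr p Z c := by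
  simp only [pr]
  rw [sum_comm]
  simp [Prod.ext_iff, ite_and]

lemma entropy_eq_neg_sum (X : Ω → A) : entropy p X = -∑ ω, p ω * log (pr p X (X ω)) := by
  simp only [entropy, negMulLog, neg_mul, sum_neg_distrib, sum_pr_mul]

variable [Fintype B] [Fintype C]

lemma entropy_comp_eq_neg_sum (g : A → B) (V : Ω → A) :
    entropy p (fun ω => g (V ω)) = -∑ a, pr p V a * log (pr p (fun ω => g (V ω)) (g a)) := by
  rw [entropy_eq_neg_sum, sum_pr_mul V fun a => log (pr p (fun ω => g (V ω)) (g a))]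

lemma entropy_congr {X : Ω → A} {Y : Ω → B} (h : ∀ ω ω', X ω = X ω' ↔ Y ω = Y ω') :
    entropy p X = entropy p Y := by
  simp only [entropy_eq_neg_sum, pr_congr fun ω' => h ω' _]


theorem condMutualInfo_nonneg (hp0 : ∀ ω, 0 ≤ p ω) (X : Ω → A) (Y : Ω → B) (Z : Ω → C) :
    0 ≤ condMutualInfo p X Y Z := by
  set V : Ω → (A × B) × C := fun ω => ((X ω, Y ω), Z ω) with hV
  set α := pr p (fun ω => (X ω, Z ω))
  set β := pr p (fun ω => (Y ω, Z ω))
  set γ := pr p Z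
  have hXZ : entropy p (fun ω => (X ω, Z ω)) = -∑ t, pr p V t * log (α (t.1.1, t.2)) :=
    entropy_comp_eq_neg_sum (fun t => (t.1.1, t.2)) V
  have hYZ : entropy p (fun ω => (Y ω, Z ω)) = -∑ t, pr p V t * log (β (t.1.2, t.2)) :=
    entropy_comp_eq_neg_sum (fun t => (t.1.2, t.2)) V
  have hXYZ : entropy p V = -∑ t, pr p V t * log (pr p V t) := entropy_comp_eq_neg_sum id V
  have hZ : entropy p Z = -∑ t, pr p V t * log (γ t.2) := entropy_comp_eq_neg_sum Prod.snd V
  have hpoint : ∀ t, pr p V t - α (t.1.1, t.2) * β (t.1.2, t.2) / γ t.2 ≤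
      pr p V t * (log (pr p V t) + log (γ t.2) - log (α (t.1.1, t.2)) - log (β (t.1.2, t.2))) :=
    fun t => sub_mul_div_le_mul_log (pr_nonneg hp0 V t)
      (pr_le_pr_comp hp0 (fun t => (t.1.1, t.2)) V t) (pr_le_pr_comp hp0 (fun t => (t.1.2, t.2)) V t) (pr_le_pr_comp hp0 Prod.snd V t)
  -- summing out `a` and `b` leaves `γ c * γ c / γ c = γ c`
  have hmass : ∑ t : (A × B) × C, α (t.1.1, t.2) * β (t.1.2, t.2) / γ t.2 = ∑ t, pr p V t := by
    rw [sum_pr, ← sum_pr (p := p) Z, Fintype.sum_prod_type, sum_comm]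
    refine sum_congr rfl fun c _ => ?_
    rw [Fintype.sum_prod_type]
    simp only [← sum_div, ← sum_mul_sum]
    rw [sum_pr_prod_left, sum_pr_prod_left, mul_self_div_self]
  have hsum := sum_le_sum fun t (_ : t ∈ univ) => hpoint t
  simp only [sum_sub_distrib, mul_add, mul_sub, sum_add_distrib, hmass] at hsum
  rw [condMutualInfo, hXZ, hYZ, ← hV, hXYZ, hZ]
  linarith

lemma condEntropy_congr_left {X : Ω → A} {Y : Ω → B} (W : Ω → C)
    (h : ∀ ω ω', X ω = X ω' ↔ Y ω = Y ω') : condEntropy p X W = condEntropy p Y W := by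
  rw [condEntropy, condEntropy, entropy_congr (Y := fun ω => (Y ω, W ω))]
  intro ω ω'
  simp only [Prod.mk.injEq, h]

lemma condEntropy_congr_right (X : Ω → A) {Z : Ω → B} {W : Ω → C}
    (h : ∀ ω ω', Z ω = Z ω' ↔ W ω = W ω') : condEntropy p X Z = condEntropy p X W := by
  rw [condEntropy, condEntropy, entropy_congr h, entropy_congr (Y := fun ω => (X ω, W ω))]
  intro ω ω'
  simp only [Prod.mk.injEq, h]

lemma condMutualInfo_eq_condEntropy_sub (X : Ω → A) (Y : Ω → B) (Z : Ω → C) :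
    condMutualInfo p X Y Z = condEntropy p X Z - condEntropy p X (fun ω => (Z ω, Y ω)) := by
  rw [condMutualInfo, condEntropy, condEntropy,
    entropy_congr (X := fun ω => (Y ω, Z ω)) (Y := fun ω => (Z ω, Y ω)),
    entropy_congr (X := fun ω => ((X ω, Y ω), Z ω)) (Y := fun ω => (X ω, (Z ω, Y ω)))]
  · ring
  all_goals intro ω ω'; simp only [Prod.mk.injEq]; tauto

lemma condMutualInfo_comm (X : Ω → A) (Y : Ω → B) (Z : Ω → C) :
    condMutualInfo p X Y Z = condMutualInfo p Y X Z := by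
  rw [condMutualInfo, condMutualInfo,
    entropy_congr (X := fun ω => ((X ω, Y ω), Z ω)) (Y := fun ω => ((Y ω, X ω), Z ω))]
  · ring
  intro ω ω'; simp only [Prod.mk.injEq]; tauto

lemma condEntropy_prod (X : Ω → A) (Y : Ω → B) (W : Ω → C) :
    condEntropy p (fun ω => (X ω, Y ω)) W
      = condEntropy p X W + condEntropy p Y (fun ω => (W ω, X ω)) := by
  rw [condEntropy, condEntropy, condEntropy,
    entropy_congr (X := fun ω => (W ω, X ω)) (Y := fun ω => (X ω, W ω)),
    entropy_congr (X := fun ω => ((X ω, Y ω), W ω)) (Y := fun ω => (Y ω, (W ω, X ω)))]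
  · ring
  all_goals intro ω ω'; simp only [Prod.mk.injEq]; tauto

lemma mutualInfo_prod (X : Ω → A) (Y : Ω → B) (Z : Ω → C) :
    mutualInfo p X (fun ω => (Y ω, Z ω)) = mutualInfo p X Y + condMutualInfo p X Z Y := by
  rw [mutualInfo, mutualInfo, condMutualInfo,
    entropy_congr (X := fun ω => (Y ω, Z ω)) (Y := fun ω => (Z ω, Y ω)),
    entropy_congr (X := fun ω => (X ω, (Y ω, Z ω))) (Y := fun ω => ((X ω, Z ω), Y ω))]
  · ring
  all_goals intro ω ω'; simp only [Prod.mk.injEq]; tauto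

lemma condEntropy_le_of_determines (hp0 : ∀ ω, 0 ≤ p ω) (X : Ω → A) {Z : Ω → B} {W : Ω → C}
    (h : ∀ ω ω', Z ω = Z ω' → W ω = W ω') : condEntropy p X Z ≤ condEntropy p X W := by
  have hZ : condEntropy p X Z = condEntropy p X (fun ω => (W ω, Z ω)) :=
    condEntropy_congr_right X fun ω ω' =>
      ⟨fun hz => Prod.ext (h ω ω' hz) hz, fun hwz => (Prod.ext_iff.1 hwz).2⟩
  have hnonneg := condMutualInfo_nonneg hp0 X Z W
  rw [condMutualInfo_eq_condEntropy_sub] at hnonneg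
  linarith

section Subfamily

variable {ι : Type*} [Fintype ι] [DecidableEq ι] {T S : ι → Type*}
  [∀ i, Fintype (T i)] [∀ i, Fintype (S i)]

lemma condEntropy_tupleOn_empty (X : ∀ i, Ω → T i) (W : Ω → C) :
    condEntropy p (tupleOn X ∅) W = 0 := by
  rw [condEntropy, sub_eq_zero]
  exact entropy_congr fun ω ω' => by simp [tupleOn_eq_tupleOn_iff]

lemma condEntropy_tupleOn_insert (X : ∀ i, Ω → T i) (W : Ω → C) (i : ι) (s : Finset ι) :
    condEntropy p (tupleOn X (insert i s)) W
      = condEntropy p (tupleOn X s) W + condEntropy p (X i) (fun ω => (W ω, tupleOn X s ω)) := by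
  rw [← condEntropy_prod]
  refine condEntropy_congr_left W fun ω ω' => ?_
  simp only [tupleOn_eq_tupleOn_iff, forall_mem_insert, Prod.mk.injEq]
  tauto

lemma condEntropy_pi_eq_tupleOn_univ (X : ∀ i, Ω → T i) (W : Ω → C) :
    condEntropy p (fun ω i => X i ω) W = condEntropy p (tupleOn X univ) W :=
  condEntropy_congr_left W fun ω ω' => by rw [tupleOn_eq_tupleOn_iff]; simp [funext_iff]

lemma condEntropy_pi_le_sum (hp0 : ∀ ω, 0 ≤ p ω) (X : ∀ i, Ω → T i) (W : Ω → C) :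
    condEntropy p (fun ω i => X i ω) W ≤ ∑ i, condEntropy p (X i) W := by
  rw [condEntropy_pi_eq_tupleOn_univ]
  induction (univ : Finset ι) using Finset.induction_on with
  | empty => simp [condEntropy_tupleOn_empty]
  | insert i s hi ih =>
    rw [condEntropy_tupleOn_insert, sum_insert hi]
    have hdrop := condEntropy_le_of_determines hp0 (X i) (Z := fun ω => (W ω, tupleOn X s ω))
      (W := W) fun ω ω' h => (Prod.ext_iff.1 h).1
    linarith

lemma sum_condEntropy_le_condEntropy_pi (hp0 : ∀ ω, 0 ≤ p ω) (X : ∀ i, Ω → T i) (W : Ω → C) :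
    ∑ i, condEntropy p (X i) (fun ω => (W ω, fun j : {j // j ≠ i} => X j ω))
      ≤ condEntropy p (fun ω i => X i ω) W := by
  rw [condEntropy_pi_eq_tupleOn_univ]
  induction (univ : Finset ι) using Finset.induction_on with
  | empty => simp [condEntropy_tupleOn_empty]
  | insert i s hi ih =>
    rw [condEntropy_tupleOn_insert, sum_insert hi]
    have hmore := condEntropy_le_of_determines hp0 (X i)
      (Z := fun ω => (W ω, fun j : {j // j ≠ i} => X j ω))
      (W := fun ω => (W ω, tupleOn X s ω)) fun ω ω' h => by
        simp only [Prod.mk.injEq, funext_iff, Subtype.forall] at h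
        exact Prod.ext h.1 (tupleOn_eq_tupleOn_iff.2 fun j hj => h.2 j (ne_of_mem_of_not_mem hj hi))
    linarith

lemma condMutualInfo_pi_le_sum (hp0 : ∀ ω, 0 ≤ p ω) (X : ∀ i, Ω → T i) (Y : ∀ i, Ω → S i)
    (Z : Ω → C) (hXY : ∀ i, condMutualInfo p (X i)
      (fun ω => fun j : {j // j ≠ i} => (Y j.1 ω, X j.1 ω)) (fun ω => (Z ω, Y i ω)) = 0) :
    condMutualInfo p (fun ω i => X i ω) (fun ω i => Y i ω) Z
      ≤ ∑ i, condMutualInfo p (X i) (Y i) Z := by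
  have hsplit (i : ι) : condEntropy p (X i)
      (fun ω => ((Z ω, fun k => Y k ω), fun j : {j // j ≠ i} => X j ω))
        = condEntropy p (X i) (fun ω => (Z ω, Y i ω)) := by
    have h := hXY i
    rw [condMutualInfo_eq_condEntropy_sub] at h
    rw [sub_eq_zero.1 h]
    refine condEntropy_congr_right (X i) fun ω ω' => ?_
    simp only [Prod.mk.injEq, funext_iff, Subtype.forall]
    constructor
    · rintro ⟨⟨hZ, hY⟩, hX⟩
      exact ⟨⟨hZ, hY i⟩, fun j hj => ⟨hY j, hX j hj⟩⟩
    · rintro ⟨⟨hZ, hYi⟩, hYX⟩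
      refine ⟨⟨hZ, fun j => ?_⟩, fun j hj => (hYX j hj).2⟩
      rcases eq_or_ne j i with rfl | hj
      exacts [hYi, (hYX j hj).1]
  have hlow := sum_condEntropy_le_condEntropy_pi hp0 X (fun ω => (Z ω, fun i => Y i ω))
  simp only [hsplit] at hlow
  have hsub := condEntropy_pi_le_sum hp0 X Z
  simp only [condMutualInfo_eq_condEntropy_sub, sum_sub_distrib]
  linarith

lemma sum_condMutualInfo_le_pi (hp0 : ∀ ω, 0 ≤ p ω) (X : ∀ i, Ω → T i) (Y : ∀ i, Ω → S i)
    (Z : Ω → C) (hY : condEntropy p (fun ω i => Y i ω) Z = ∑ i, condEntropy p (Y i) Z) :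
    ∑ i, condMutualInfo p (X i) (Y i) Z
      ≤ condMutualInfo p (fun ω i => X i ω) (fun ω i => Y i ω) Z := by
  have hsub := condEntropy_pi_le_sum hp0 Y (fun ω => (Z ω, fun i => X i ω))
  have hdrop (i : ι) : condEntropy p (Y i) (fun ω => (Z ω, fun i => X i ω))
      ≤ condEntropy p (Y i) (fun ω => (Z ω, X i ω)) :=
    condEntropy_le_of_determines hp0 (Y i) fun ω ω' h => by simp_all [funext_iff]
  rw [condMutualInfo_comm]
  simp only [condMutualInfo_comm (X _), condMutualInfo_eq_condEntropy_sub, sum_sub_distrib, ← hY]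
  linarith [sum_le_sum fun i (_ : i ∈ univ) => hdrop i]

end Subfamily

end InformationTheory

theorem statement5_general {Ω Ψ : Type*} [Fintype Ω] [Fintype Ψ] {M : ℕ}
    {Θs Ds : Fin M → Type*} [∀ m, Fintype (Θs m)] [∀ m, Fintype (Ds m)]
    (p : Ω → ℝ) (hp0 : ∀ ω, 0 ≤ p ω)
    (ψ : Ω → Ψ) (θ : ∀ m, Ω → Θs m) (D : ∀ m, Ω → Ds m)
    (ha : condEntropy p (fun ω => (fun m => θ m ω)) ψ = ∑ m, condEntropy p (θ m) ψ)
    (hb : ∀ m : Fin M, condMutualInfo p (D m)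
        (fun ω => (fun j : {j : Fin M // j ≠ m} => (θ j.1 ω, D j.1 ω)))
        (fun ω => (ψ ω, θ m ω)) = 0) :
    mutualInfo p (fun ω => (fun m => D m ω)) (fun ω => (ψ ω, fun m => θ m ω))
      = mutualInfo p (fun ω => (fun m => D m ω)) ψ
        + ∑ m, condMutualInfo p (D m) (θ m) ψ := by
  rw [mutualInfo_prod]
  exact congrArg _ (le_antisymm (condMutualInfo_pi_le_sum hp0 D θ ψ hb)
    (sum_condMutualInfo_le_pi hp0 D θ ψ ha))

/-- meta-learning estimation error decomposition. -/
theorem statement5 {Ω Ψ : Type*} [Fintype Ω] [Fintype Ψ] {M : ℕ}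
    {Θs Ds : Fin M → Type*} [∀ m, Fintype (Θs m)] [∀ m, Fintype (Ds m)]
    (p : Ω → ℝ) (hp0 : ∀ ω, 0 ≤ p ω) (hp1 : ∑ ω, p ω = 1)
    (ψ : Ω → Ψ) (θ : ∀ m, Ω → Θs m) (D : ∀ m, Ω → Ds m)
    (ha : condEntropy p (fun ω => (fun m => θ m ω)) ψ = ∑ m, condEntropy p (θ m) ψ)
    (hb : ∀ m : Fin M, condMutualInfo p (D m)
        (fun ω => (fun j : {j : Fin M // j ≠ m} => (θ j.1 ω, D j.1 ω)))
        (fun ω => (ψ ω, θ m ω)) = 0) :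
    mutualInfo p (fun ω => (fun m => D m ω)) (fun ω => (ψ ω, fun m => θ m ω))
      = mutualInfo p (fun ω => (fun m => D m ω)) ψ
        + ∑ m, condMutualInfo p (D m) (θ m) ψ :=
  statement5_general p hp0 ψ θ D ha hb
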